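/- Assume D ≠ 0 and let p be a prime with p ∤ D. Then Σ μ(p)·μ(c₁)⋯μ(c_g)·ρ(c₁,…,c_g)/(c₁⋯c_g)² = (ρ(p,1,…,1) + ρ(1,p,1,…,1) + ⋯ + ρ(1,…,1,p) + 1 − g)/p², where the left-hand sum is over all g-tuples (c₁,…,c_g) of positive integers with c_i ∣ p for every i and p ∣ c₁⋯c_g, and μ denotes the Möbius function. -/

import Mathlib

open Finset

/-- The binary quadratic form `q_i(x,y) = a_i x^2 + 2 b_i x y + c_i y^2`. -/
def qf {g : ℕ} (a b c : Fin g → ℤ) (i : Fin g) (x : ℤ × ℤ) : ℤ :=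
  a i * x.1 ^ 2 + 2 * b i * x.1 * x.2 + c i * x.2 ^ 2

/-- The resolvent of two binary quadratic forms. -/
def res₂ (a₁ b₁ c₁ a₂ b₂ c₂ : ℤ) : ℤ :=
  (a₁ * c₂ - a₂ * c₁) ^ 2 - 4 * (b₁ * c₂ - b₂ * c₁) * (a₁ * b₂ - a₂ * b₁)

/-- The quantity `D`. -/
def Dconst (g : ℕ) (a b c : Fin g → ℤ) : ℤ :=
  (∏ p ∈ (Finset.range (2 * g + 1)).filter Nat.Prime, (p : ℤ)) *
    (∏ k, a k * c k * (b k ^ 2 - a k * c k)) *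
    ∏ i, ∏ j ∈ Finset.Ioi i, res₂ (a i) (b i) (c i) (a j) (b j) (c j)

/-- `ρ(d₁,…,d_g)`. -/
def rho (g : ℕ) (a b c : Fin g → ℤ) (d : Fin g → ℕ) : ℕ :=
  (((Finset.range (∏ i, d i)) ×ˢ (Finset.range (∏ i, d i))).filter
    (fun x => ∀ i, (d i : ℤ) ∣ qf a b c i ((x.1 : ℤ), (x.2 : ℤ)))).card

/-- `ρ*(d₁,…,d_g)`. -/
def rhostar (g : ℕ) (a b c : Fin g → ℤ) (d : Fin g → ℕ) : ℕ :=
  (((Finset.range (∏ i, d i)) ×ˢ (Finset.range (∏ i, d i))).filter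
    (fun x => (∀ i, (d i : ℤ) ∣ qf a b c i ((x.1 : ℤ), (x.2 : ℤ))) ∧
      Nat.gcd (Nat.gcd x.1 x.2) (∏ i, d i) = 1)).card

/-- `ψ(d₁,…,d_g) = ∏_p p^{⌈max_i v_p(d_i)/2⌉}`. -/
def psi (g : ℕ) (d : Fin g → ℕ) : ℕ :=
  ∏ p ∈ (∏ i, d i).primeFactors,
    p ^ (((Finset.univ.sup fun i => (d i).factorization p) + 1) / 2)

/-!
The tuples `(c₁,…,c_g)` in the sum are `primeTuple p S` for the nonempty sets `S` of indices
`i` with `cᵢ = p`, and the corresponding summand is `-(-1)^|S| ρ / p^(2|S|)`.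
If `|S| ≥ 2`, two of the forms vanish mod `p` at `x`. Their resolvent times `x₂³` (and, by
symmetry, times `x₁³`) is a combination of the two forms, so as `p` does not divide the
resolvent, `p ∣ x₁` and `p ∣ x₂`. Hence `ρ = p^(2(|S|-1))` and the summand is `-(-1)^|S| / p²`.
As the alternating sum over all subsets vanishes, these summands add up to `(1 - g) / p²`,
while the singletons contribute `ρ(p,1,…,1)/p² + ⋯ + ρ(1,…,1,p)/p²`.
-/

lemma res₂_mul_pow_three (a₁ b₁ c₁ a₂ b₂ c₂ x₁ x₂ : ℤ) :
    res₂ a₁ b₁ c₁ a₂ b₂ c₂ * x₂ ^ 3 =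
      ((-2*b₁*a₂^2 + 2*a₁*a₂*b₂) * x₁ + (c₁*a₂^2 - 4*b₁*a₂*b₂ + 4*a₁*b₂^2 - a₁*a₂*c₂) * x₂) *
        (a₁*x₁^2 + 2*b₁*x₁*x₂ + c₁*x₂^2) +
      ((2*a₁*b₁*a₂ - 2*a₁^2*b₂) * x₁ + (4*b₁^2*a₂ - a₁*c₁*a₂ - 4*a₁*b₁*b₂ + a₁^2*c₂) * x₂) *
        (a₂*x₁^2 + 2*b₂*x₁*x₂ + c₂*x₂^2) := by
  unfold res₂; ring

lemma res₂_comm (a₁ b₁ c₁ a₂ b₂ c₂ : ℤ) :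
    res₂ a₂ b₂ c₂ a₁ b₁ c₁ = res₂ a₁ b₁ c₁ a₂ b₂ c₂ := by
  unfold res₂; ring

lemma res₂_swap (a₁ b₁ c₁ a₂ b₂ c₂ : ℤ) :
    res₂ c₁ b₁ a₁ c₂ b₂ a₂ = res₂ a₁ b₁ c₁ a₂ b₂ c₂ := by
  unfold res₂; ring

section Forms

variable {p a₁ b₁ c₁ a₂ b₂ c₂ x₁ x₂ : ℤ}

lemma Prime.dvd_right_of_dvd_forms (hp : Prime p) (hR : ¬ p ∣ res₂ a₁ b₁ c₁ a₂ b₂ c₂)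
    (h₁ : p ∣ a₁*x₁^2 + 2*b₁*x₁*x₂ + c₁*x₂^2) (h₂ : p ∣ a₂*x₁^2 + 2*b₂*x₁*x₂ + c₂*x₂^2) :
    p ∣ x₂ := by
  have h : p ∣ res₂ a₁ b₁ c₁ a₂ b₂ c₂ * x₂ ^ 3 :=
    res₂_mul_pow_three .. ▸ dvd_add (h₁.mul_left _) (h₂.mul_left _)
  exact hp.dvd_of_dvd_pow ((hp.dvd_or_dvd h).resolve_left hR)

lemma Prime.dvd_of_dvd_forms (hp : Prime p) (hR : ¬ p ∣ res₂ a₁ b₁ c₁ a₂ b₂ c₂)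
    (h₁ : p ∣ a₁*x₁^2 + 2*b₁*x₁*x₂ + c₁*x₂^2) (h₂ : p ∣ a₂*x₁^2 + 2*b₂*x₁*x₂ + c₂*x₂^2) :
    p ∣ x₁ ∧ p ∣ x₂ := by
  refine ⟨hp.dvd_right_of_dvd_forms (a₁ := c₁) (c₁ := a₁) (a₂ := c₂) (c₂ := a₂) (x₁ := x₂)
    (by rwa [res₂_swap]) ?_ ?_, hp.dvd_right_of_dvd_forms hR h₁ h₂⟩
  · convert h₁ using 1; ring
  · convert h₂ using 1; ring

end Forms

lemma res₂_dvd_Dconst {g : ℕ} (a b c : Fin g → ℤ) {i j : Fin g} (hij : i ≠ j) :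
    res₂ (a i) (b i) (c i) (a j) (b j) (c j) ∣ Dconst g a b c := by
  refine Dvd.dvd.mul_left ?_ _
  have hprod : ∀ {k l : Fin g}, k < l →
      res₂ (a k) (b k) (c k) (a l) (b l) (c l) ∣
        ∏ i, ∏ j ∈ Ioi i, res₂ (a i) (b i) (c i) (a j) (b j) (c j) := fun {k l} hkl =>
    (dvd_prod_of_mem _ (mem_Ioi.mpr hkl)).trans
      (dvd_prod_of_mem (fun i => ∏ j ∈ Ioi i, res₂ (a i) (b i) (c i) (a j) (b j) (c j))
        (mem_univ k))
  rcases hij.lt_or_gt with h | h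
  · exact hprod h
  · exact res₂_comm .. ▸ hprod h

lemma card_filter_dvd_range_mul {d : ℕ} (hd : 0 < d) (m : ℕ) :
    #{n ∈ range (d * m) | d ∣ n} = m := by
  have h : {n ∈ range (d * m) | d ∣ n} = (range m).map ⟨(d * ·), mul_right_injective₀ hd.ne'⟩ := by
    ext n
    simp only [mem_filter, mem_range, mem_map, Function.Embedding.coeFn_mk]
    constructor
    · rintro ⟨hn, k, rfl⟩
      exact ⟨k, lt_of_mul_lt_mul_left hn hd.le, rfl⟩
    · rintro ⟨k, hk, rfl⟩
      exact ⟨Nat.mul_lt_mul_of_pos_left hk hd, dvd_mul_right d k⟩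
  rw [h, card_map, card_range]

def primeTuple {ι : Type*} [DecidableEq ι] (p : ℕ) (S : Finset ι) : ι → ℕ :=
  fun i => if i ∈ S then p else 1

section PrimeTuple

variable {ι : Type*} [DecidableEq ι] {p : ℕ}

lemma primeTuple_singleton (i : ι) : primeTuple p {i} = fun j => if j = i then p else 1 := by
  ext j
  simp [primeTuple]

lemma prod_primeTuple [Fintype ι] (S : Finset ι) : ∏ i, primeTuple p S i = p ^ #S := by
  simp [primeTuple, prod_ite_mem]

lemma prod_moebius_primeTuple [Fintype ι] {R : Type*} [CommRing R] (hp : p.Prime) (S : Finset ι) :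
    ∏ i, (ArithmeticFunction.moebius (primeTuple p S i) : R) = (-1) ^ #S := by
  simp [primeTuple, apply_ite, ArithmeticFunction.moebius_apply_prime hp, prod_ite_mem]

lemma primeTuple_injective (hp : p ≠ 1) : Function.Injective (primeTuple (ι := ι) p) := by
  intro S T h
  ext i
  have := congrFun h i
  by_cases hS : i ∈ S <;> by_cases hT : i ∈ T <;> simp_all [primeTuple]

lemma image_primeTuple [Fintype ι] (hp : p.Prime) :
    (univ.erase ∅).image (primeTuple p) =
      {ct ∈ Fintype.piFinset fun _ : ι => p.divisors | p ∣ ∏ i, ct i} := by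
  ext ct
  simp only [mem_image, mem_erase, mem_univ, and_true, mem_filter, Fintype.mem_piFinset,
    Nat.mem_divisors]
  constructor
  · rintro ⟨S, hS, rfl⟩
    refine ⟨fun i => ⟨?_, hp.ne_zero⟩, ?_⟩
    · unfold primeTuple; split_ifs <;> simp
    · rw [prod_primeTuple]
      exact dvd_pow_self p (card_ne_zero.mpr (nonempty_iff_ne_empty.mpr hS))
  · rintro ⟨hct, hdvd⟩
    have hval (i : ι) : ct i = 1 ∨ ct i = p := (Nat.dvd_prime hp).mp (hct i).1
    refine ⟨univ.filter (ct · = p), ?_, ?_⟩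
    · rintro hS
      have hone : ∀ i, ct i = 1 := fun i =>
        (hval i).resolve_right fun h => by simpa [h] using congrArg (i ∈ ·) hS
      rw [prod_eq_one fun i _ => hone i] at hdvd
      exact hp.ne_one (Nat.dvd_one.mp hdvd)
    · ext i
      rcases hval i with h | h <;> simp [primeTuple, h, hp.ne_one.symm]

end PrimeTuple

lemma rho_primeTuple {g : ℕ} (a b c : Fin g → ℤ) {p : ℕ} (hp : p.Prime)
    (hres : ∀ i j, i ≠ j → ¬ (p : ℤ) ∣ res₂ (a i) (b i) (c i) (a j) (b j) (c j))
    {S : Finset (Fin g)} (hS : 2 ≤ #S) :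
    rho g a b c (primeTuple p S) = (p ^ (#S - 1)) ^ 2 := by
  obtain ⟨i, hi, j, hj, hij⟩ := one_lt_card.mp hS
  have key (x : ℕ × ℕ) :
      (∀ k, (primeTuple p S k : ℤ) ∣ qf a b c k (x.1, x.2)) ↔ p ∣ x.1 ∧ p ∣ x.2 := by
    constructor
    · intro h
      have := (Nat.prime_iff_prime_int.mp hp).dvd_of_dvd_forms (x₁ := x.1) (x₂ := x.2)
        (hres i j hij) (by simpa [primeTuple, hi, qf] using h i)
        (by simpa [primeTuple, hj, qf] using h j)
      exact_mod_cast this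
    · rintro ⟨⟨u, hu⟩, ⟨v, hv⟩⟩ k
      unfold primeTuple qf
      split_ifs
      · refine ⟨a k * p * u ^ 2 + 2 * b k * p * u * v + c k * p * v ^ 2, ?_⟩
        rw [hu, hv]
        push_cast
        ring
      · exact one_dvd _
  have hN : ∏ k, primeTuple p S k = p * p ^ (#S - 1) := by
    rw [prod_primeTuple, ← pow_succ', Nat.sub_add_cancel (by omega)]
  rw [rho, filter_congr fun x _ => key x, filter_product, card_product, hN,
    card_filter_dvd_range_mul hp.pos, sq]

section Subsets

variable {ι : Type*} [Fintype ι] [DecidableEq ι]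

lemma sum_erase_empty_eq_sum_singleton_add {M : Type*} [AddCommMonoid M] (f : Finset ι → M) :
    ∑ S ∈ univ.erase ∅, f S = ∑ i, f {i} + ∑ S with 2 ≤ #S, f S := by
  rw [← sum_filter_add_sum_filter_not _ (fun S => #S = 1)]
  congr 1
  · have h : {S ∈ (univ : Finset (Finset ι)).erase ∅ | #S = 1} =
        univ.map ⟨singleton, singleton_injective⟩ := by
      ext S
      simpa [card_eq_one, eq_comm] using fun x (h : S = {x}) => h ▸ singleton_ne_empty x
    rw [h, sum_map]
    rfl
  · congr 1
    ext S
    simp only [mem_filter, mem_erase, mem_univ, and_true, true_and, ne_eq, ← card_eq_zero]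
    omega

lemma sum_two_le_card_neg_one_pow [Nonempty ι] {R : Type*} [CommRing R] :
    ∑ S : Finset ι with 2 ≤ #S, (-1 : R) ^ #S = Fintype.card ι - 1 := by
  have h : ∑ S : Finset ι, (-1 : R) ^ #S = 0 := by
    have := congrArg (Int.cast : ℤ → R)
      (sum_powerset_neg_one_pow_card_of_nonempty (univ_nonempty (α := ι)))
    simpa using this
  rw [← add_sum_erase _ _ (mem_univ ∅), sum_erase_empty_eq_sum_singleton_add] at h
  simp only [card_empty, pow_zero, card_singleton, pow_one, sum_const, card_univ] at h
  linear_combination h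

end Subsets

theorem stmt17_general (g : ℕ) (hg : 2 ≤ g) (a b c : Fin g → ℤ)
    (p : ℕ) (hp : p.Prime) (hpD : ¬ ((p : ℤ) ∣ Dconst g a b c)) :
    ∑ ct ∈ (Fintype.piFinset fun _ : Fin g => p.divisors).filter
        (fun ct => p ∣ ∏ i, ct i),
      (ArithmeticFunction.moebius p : ℚ) * (∏ i, (ArithmeticFunction.moebius (ct i) : ℚ)) *
        (rho g a b c ct : ℚ) / ((∏ i, ct i : ℕ) : ℚ) ^ 2 =
      ((∑ i : Fin g, (rho g a b c (fun j => if j = i then p else 1) : ℚ)) + 1 - g) /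
        (p : ℚ) ^ 2 := by
  have : Nonempty (Fin g) := ⟨⟨0, by omega⟩⟩
  have hres (i j : Fin g) (hij : i ≠ j) : ¬ (p : ℤ) ∣ res₂ (a i) (b i) (c i) (a j) (b j) (c j) :=
    fun h => hpD (h.trans (res₂_dvd_Dconst a b c hij))
  have hp₀ : (p : ℚ) ≠ 0 := by exact_mod_cast hp.ne_zero
  have hone (i : Fin g) (_ : i ∈ univ) :
      -1 * (-1) ^ 1 * (rho g a b c (primeTuple p {i}) : ℚ) / ((p : ℚ) ^ 1) ^ 2 =
        (rho g a b c (fun j => if j = i then p else 1) : ℚ) / (p : ℚ) ^ 2 := by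
    simp [primeTuple_singleton]
  have hmany (S : Finset (Fin g)) (hS : S ∈ ({S | 2 ≤ #S} : Finset (Finset (Fin g)))) :
      -1 * (-1) ^ #S * (rho g a b c (primeTuple p S) : ℚ) / ((p : ℚ) ^ #S) ^ 2 =
        -(-1) ^ #S / (p : ℚ) ^ 2 := by
    obtain ⟨k, hk⟩ := Nat.exists_eq_add_of_le' (mem_filter.mp hS).2
    rw [rho_primeTuple a b c hp hres (mem_filter.mp hS).2, hk]
    field_simp
    push_cast
    ring
  rw [← image_primeTuple hp, sum_image (primeTuple_injective hp.ne_one).injOn,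
    sum_erase_empty_eq_sum_singleton_add]
  simp only [prod_primeTuple, prod_moebius_primeTuple hp, ArithmeticFunction.moebius_apply_prime hp,
    card_singleton]
  push_cast
  rw [sum_congr rfl hone, sum_congr rfl hmany, ← sum_div, ← sum_div, sum_neg_distrib,
    sum_two_le_card_neg_one_pow, Fintype.card_fin]
  ring

/-- evaluation of the Möbius-weighted sum of `ρ(c₁,…,c_g)/(c₁⋯c_g)²`
over tuples with `cᵢ ∣ p` and `p ∣ c₁⋯c_g`. -/
theorem stmt17 (g : ℕ) (hg : 2 ≤ g) (a b c : Fin g → ℤ)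
    (hirr : ∀ i, ¬ IsSquare (b i ^ 2 - a i * c i))
    (hD : Dconst g a b c ≠ 0)
    (p : ℕ) (hp : p.Prime) (hpD : ¬ ((p : ℤ) ∣ Dconst g a b c)) :
    ∑ ct ∈ (Fintype.piFinset fun _ : Fin g => p.divisors).filter
        (fun ct => p ∣ ∏ i, ct i),
      (ArithmeticFunction.moebius p : ℚ) * (∏ i, (ArithmeticFunction.moebius (ct i) : ℚ)) *
        (rho g a b c ct : ℚ) / ((∏ i, ct i : ℕ) : ℚ) ^ 2 =
      ((∑ i : Fin g, (rho g a b c (fun j => if j = i then p else 1) : ℚ)) + 1 - g) /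
        (p : ℚ) ^ 2 :=
  stmt17_general g hg a b c p hp hpD
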